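/- Let 𝒜 : ℝ^{m×n} → ℝ^p be a linear map, Δ ∈ [0,1), and let 𝒮 ⊆ ℝ^{m×n} be a linear subspace such that (1−Δ)‖Z‖_F² ≤ ‖𝒜(Z)‖₂² ≤ (1+Δ)‖Z‖_F² for all Z ∈ 𝒮. Let P denote the orthogonal projection of ℝ^{m×n} (with the Frobenius inner product) onto 𝒮, let 𝒜* be the adjoint of 𝒜, and let α ≥ 0. Then: (i) for every Z ∈ 𝒮, (1 − α(1+Δ))‖Z‖_F² ≤ ⟨Z, Z − α P(𝒜*(𝒜(Z)))⟩ ≤ (1 − α(1−Δ))‖Z‖_F²; and (ii) for all Z₁, Z₂ ∈ 𝒮, ⟨Z₁, Z₂⟩ − α⟨𝒜(Z₁), 𝒜(Z₂)⟩ ≤ max(|1 − α(1−Δ)|, |1 − α(1+Δ)|) · ‖Z₁‖_F · ‖Z₂‖_F. -/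

import Mathlib

open scoped BigOperators
open Matrix

noncomputable section

def mInner {m n : ℕ} (A B : Matrix (Fin m) (Fin n) ℝ) : ℝ := ∑ i, ∑ j, A i j * B i j

def frobSq {m n : ℕ} (A : Matrix (Fin m) (Fin n) ℝ) : ℝ := ∑ i, ∑ j, (A i j) ^ 2

def frobNorm {m n : ℕ} (A : Matrix (Fin m) (Fin n) ℝ) : ℝ := Real.sqrt (frobSq A)

def vInner {p : ℕ} (u v : Fin p → ℝ) : ℝ := ∑ i, u i * v i

def vNormSq {p : ℕ} (v : Fin p → ℝ) : ℝ := ∑ i, (v i) ^ 2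

def vNorm {p : ℕ} (v : Fin p → ℝ) : ℝ := Real.sqrt (vNormSq v)

/-- Number of nonzero entries of a matrix. -/
def sparseCount {m n : ℕ} (S : Matrix (Fin m) (Fin n) ℝ) : ℕ :=
  {q : Fin m × Fin n | S q.1 q.2 ≠ 0}.ncard

/-- `L` is `μ`-incoherent of rank at most `r`: `rank L ≤ r` and `L` admits a (truncated)
singular value decomposition `L = U * diagonal d * Vᵀ` with `U ∈ ℝ^{m×r}`, `V ∈ ℝ^{n×r}`
having orthonormal columns (the top `r` left/right singular vectors) whose rows satisfy
`‖Uᵀ eᵢ‖₂ ≤ √(μ r / m)` and `‖Vᵀ fⱼ‖₂ ≤ √(μ r / n)`. -/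
def Incoherent {m n : ℕ} (μ : ℝ) (r : ℕ) (L : Matrix (Fin m) (Fin n) ℝ) : Prop :=
  L.rank ≤ r ∧
  ∃ (U : Matrix (Fin m) (Fin r) ℝ) (d : Fin r → ℝ) (V : Matrix (Fin n) (Fin r) ℝ),
    Uᵀ * U = 1 ∧ Vᵀ * V = 1 ∧ (∀ k, 0 ≤ d k) ∧ L = U * Matrix.diagonal d * Vᵀ ∧
    (∀ i : Fin m, Real.sqrt (∑ k, (U i k) ^ 2) ≤ Real.sqrt (μ * r / m)) ∧
    (∀ j : Fin n, Real.sqrt (∑ k, (V j k) ^ 2) ≤ Real.sqrt (μ * r / n))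

/-- The set of low-rank plus sparse matrices `LS_{m,n}(r,s,μ)`. -/
def LS (m n r s : ℕ) (μ : ℝ) : Set (Matrix (Fin m) (Fin n) ℝ) :=
  {X | ∃ L S : Matrix (Fin m) (Fin n) ℝ,
      X = L + S ∧ Incoherent μ r L ∧ sparseCount S ≤ s}

/-!
On `𝒮`, orthogonality of `P` and adjointness turn `⟨Z, Z - α P 𝒜* 𝒜 Z⟩` into
`‖Z‖² - α ‖𝒜 Z‖²`, which the RIP pins between `(1 - α (1 ± Δ)) ‖Z‖²`. So the symmetric form
`⟨Z₁, Z₂⟩ - α ⟨𝒜 Z₁, 𝒜 Z₂⟩` is bounded on the diagonal by `M ‖Z‖²` with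
`M = max |1 - α (1 - Δ)| |1 - α (1 + Δ)|`. Polarization bounds it by `M (‖Z₁‖² + ‖Z₂‖²) / 2`, and
applying this to `(s Z₁, Z₂)` for every `s > 0` gives a quadratic in `s` whose discriminant
yields `M ‖Z₁‖ ‖Z₂‖`.
-/

theorem le_sqrt_mul_sqrt_of_forall_pos {a b c : ℝ} (ha : 0 ≤ a) (hb : 0 ≤ b)
    (h : ∀ s > 0, 2 * c * s ≤ a * s ^ 2 + b) : c ≤ √a * √b := by
  rcases le_or_gt c 0 with hc | hc
  · exact hc.trans (by positivity)
  -- for `c > 0` the hypothesis extends to `s ≤ 0`, so the quadratic in `s` has discriminant `≤ 0`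
  have hquad : ∀ s : ℝ, 0 ≤ a * (s * s) + (-2 * c) * s + b := fun s ↦ by
    rcases le_or_gt s 0 with hs | hs
    · nlinarith
    · nlinarith [h s hs]
  have hdisc := discrim_le_zero hquad
  rw [discrim] at hdisc
  refine (abs_le_of_sq_le_sq ?_ (by positivity)).trans' (le_abs_self c)
  rw [mul_pow, Real.sq_sqrt ha, Real.sq_sqrt hb]
  linarith

namespace LinearMap.BilinForm

variable {V : Type*} [AddCommGroup V] [Module ℝ V] {B G : LinearMap.BilinForm ℝ V}
  {S : Submodule ℝ V} {M : ℝ}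

theorem two_mul_apply_le_of_abs_apply_self_le (hB : B.IsSymm)
    (hBG : ∀ z ∈ S, |B z z| ≤ M * G z z) {x y : V} (hx : x ∈ S) (hy : y ∈ S) :
    2 * B x y ≤ M * (G x x + G y y) := by
  have hadd := (abs_le.mp (hBG (x + y) (S.add_mem hx hy))).2
  have hsub := (abs_le.mp (hBG (x - y) (S.sub_mem hx hy))).1
  simp only [map_add, map_sub, LinearMap.add_apply, LinearMap.sub_apply, hB.eq y x] at hadd hsub
  linarith

theorem apply_le_of_abs_apply_self_le (hB : B.IsSymm) (hG : ∀ z ∈ S, 0 ≤ G z z) (hM : 0 ≤ M)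
    (hBG : ∀ z ∈ S, |B z z| ≤ M * G z z) {x y : V} (hx : x ∈ S) (hy : y ∈ S) :
    B x y ≤ M * √(G x x) * √(G y y) := by
  have key : B x y ≤ √(M * G x x) * √(M * G y y) := by
    refine le_sqrt_mul_sqrt_of_forall_pos (mul_nonneg hM (hG x hx)) (mul_nonneg hM (hG y hy))
      fun s _ ↦ ?_
    have := two_mul_apply_le_of_abs_apply_self_le hB hBG (S.smul_mem s hx) hy
    simp only [map_smul, LinearMap.smul_apply, smul_eq_mul] at this
    linarith
  rwa [Real.sqrt_mul hM, Real.sqrt_mul hM, mul_mul_mul_comm, Real.mul_self_sqrt hM,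
    ← mul_assoc] at key

end LinearMap.BilinForm

theorem abs_le_max_abs_mul_of_le_of_le {l u F q : ℝ} (hF : 0 ≤ F) (hl : l * F ≤ q)
    (hu : q ≤ u * F) : |q| ≤ max |l| |u| * F := by
  simpa only [abs_mul, abs_of_nonneg hF, max_mul_of_nonneg _ _ hF] using abs_le_max_abs_abs hl hu

section Frobenius

variable {m n p : ℕ}

theorem mInner_comm (A B : Matrix (Fin m) (Fin n) ℝ) : mInner A B = mInner B A := by
  simp only [mInner, mul_comm]

theorem mInner_self (A : Matrix (Fin m) (Fin n) ℝ) : mInner A A = frobSq A := by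
  simp only [mInner, frobSq, sq]

theorem frobSq_nonneg (A : Matrix (Fin m) (Fin n) ℝ) : 0 ≤ frobSq A := by
  unfold frobSq
  positivity

theorem vInner_self (v : Fin p → ℝ) : vInner v v = vNormSq v := by
  simp only [vInner, vNormSq, sq]

theorem vInner_eq_dotProduct (u v : Fin p → ℝ) : vInner u v = u ⬝ᵥ v :=
  rfl

variable (m n) in
def frobeniusForm : LinearMap.BilinForm ℝ (Matrix (Fin m) (Fin n) ℝ) :=
  LinearMap.mk₂ ℝ mInner
    (fun _ _ _ ↦ by simp only [mInner, Matrix.add_apply, add_mul, Finset.sum_add_distrib])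
    (fun _ _ _ ↦ by simp only [mInner, Matrix.smul_apply, smul_eq_mul, Finset.mul_sum, mul_assoc])
    (fun _ _ _ ↦ by simp only [mInner, Matrix.add_apply, mul_add, Finset.sum_add_distrib])
    (fun _ _ _ ↦ by
      simp only [mInner, Matrix.smul_apply, smul_eq_mul, Finset.mul_sum, mul_left_comm])

@[simp]
theorem frobeniusForm_apply (A B : Matrix (Fin m) (Fin n) ℝ) :
    frobeniusForm m n A B = mInner A B :=
  rfl

theorem mInner_sub_smul_proj_adjoint {𝒜 : Matrix (Fin m) (Fin n) ℝ →ₗ[ℝ] (Fin p → ℝ)}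
    {𝒜adj : (Fin p → ℝ) →ₗ[ℝ] Matrix (Fin m) (Fin n) ℝ}
    (hadj : ∀ X v, vInner (𝒜 X) v = mInner X (𝒜adj v))
    {𝒮 : Submodule ℝ (Matrix (Fin m) (Fin n) ℝ)}
    {P : Matrix (Fin m) (Fin n) ℝ → Matrix (Fin m) (Fin n) ℝ}
    (hPorth : ∀ X, ∀ Z ∈ 𝒮, mInner (X - P X) Z = 0) (α : ℝ)
    {Z : Matrix (Fin m) (Fin n) ℝ} (hZ : Z ∈ 𝒮) :
    mInner Z (Z - α • P (𝒜adj (𝒜 Z))) = frobSq Z - α * vNormSq (𝒜 Z) := by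
  have hP : mInner Z (P (𝒜adj (𝒜 Z))) = mInner Z (𝒜adj (𝒜 Z)) := by
    have := hPorth (𝒜adj (𝒜 Z)) Z hZ
    rw [mInner_comm, ← frobeniusForm_apply, map_sub, sub_eq_zero] at this
    exact this.symm
  rw [← frobeniusForm_apply, map_sub, map_smul, smul_eq_mul, frobeniusForm_apply,
    frobeniusForm_apply, hP, ← hadj, mInner_self, vInner_self]

end Frobenius

theorem projected_gradient_bounds_general
    (m n p : ℕ)
    (𝒜 : Matrix (Fin m) (Fin n) ℝ →ₗ[ℝ] (Fin p → ℝ))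
    (𝒜adj : (Fin p → ℝ) →ₗ[ℝ] Matrix (Fin m) (Fin n) ℝ)
    (hadj : ∀ (X : Matrix (Fin m) (Fin n) ℝ) (v : Fin p → ℝ),
      vInner (𝒜 X) v = mInner X (𝒜adj v))
    (Δ : ℝ)
    (𝒮 : Submodule ℝ (Matrix (Fin m) (Fin n) ℝ))
    (hRIP : ∀ Z ∈ 𝒮, (1 - Δ) * frobSq Z ≤ vNormSq (𝒜 Z) ∧ vNormSq (𝒜 Z) ≤ (1 + Δ) * frobSq Z)
    (P : Matrix (Fin m) (Fin n) ℝ →ₗ[ℝ] Matrix (Fin m) (Fin n) ℝ)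
    (hPorth : ∀ X : Matrix (Fin m) (Fin n) ℝ, ∀ Z ∈ 𝒮, mInner (X - P X) Z = 0)
    (α : ℝ) (hα : 0 ≤ α) :
    (∀ Z ∈ 𝒮,
      (1 - α * (1 + Δ)) * frobSq Z ≤ mInner Z (Z - α • P (𝒜adj (𝒜 Z))) ∧
      mInner Z (Z - α • P (𝒜adj (𝒜 Z))) ≤ (1 - α * (1 - Δ)) * frobSq Z) ∧
    (∀ Z₁ ∈ 𝒮, ∀ Z₂ ∈ 𝒮,
      mInner Z₁ Z₂ - α * vInner (𝒜 Z₁) (𝒜 Z₂) ≤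
        max |1 - α * (1 - Δ)| |1 - α * (1 + Δ)| * frobNorm Z₁ * frobNorm Z₂) := by
  have hquad : ∀ Z ∈ 𝒮, (1 - α * (1 + Δ)) * frobSq Z ≤ frobSq Z - α * vNormSq (𝒜 Z) ∧
      frobSq Z - α * vNormSq (𝒜 Z) ≤ (1 - α * (1 - Δ)) * frobSq Z := fun Z hZ ↦ by
    obtain ⟨hlo, hhi⟩ := hRIP Z hZ
    constructor <;> nlinarith
  refine ⟨fun Z hZ ↦ mInner_sub_smul_proj_adjoint hadj hPorth α hZ ▸ hquad Z hZ,
    fun Z₁ h₁ Z₂ h₂ ↦ ?_⟩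
  let B := frobeniusForm m n - α • (dotProductBilin ℝ ℝ).compl₁₂ 𝒜 𝒜
  have hB : B.IsSymm := ⟨fun X Y ↦ by simp [B, mInner_comm X, dotProduct_comm]⟩
  have hBG : ∀ Z ∈ 𝒮,
      |B Z Z| ≤ max |1 - α * (1 - Δ)| |1 - α * (1 + Δ)| * frobeniusForm m n Z Z := fun Z hZ ↦ by
    simpa [B, max_comm, mInner_self, ← vInner_self, vInner_eq_dotProduct] using
      abs_le_max_abs_mul_of_le_of_le (frobSq_nonneg Z) (hquad Z hZ).1 (hquad Z hZ).2
  simpa [B, frobNorm, mInner_self, vInner_eq_dotProduct] using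
    LinearMap.BilinForm.apply_le_of_abs_apply_self_le hB
      (fun Z _ ↦ (frobSq_nonneg Z).trans_eq (mInner_self Z).symm) (by positivity) hBG h₁ h₂

/-- spectral bounds for `I − α P 𝒜* 𝒜` on a subspace `𝒮` on which `𝒜`
satisfies the RIP with constant `Δ`.  Here `P` is the orthogonal projection onto `𝒮`
(characterized by `P X ∈ 𝒮` and `X − P X ⟂ 𝒮`) and `𝒜*` the adjoint of `𝒜` with respect to
the Frobenius inner product. -/
theorem projected_gradient_bounds
    (m n p : ℕ)
    (𝒜 : Matrix (Fin m) (Fin n) ℝ →ₗ[ℝ] (Fin p → ℝ))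
    (𝒜adj : (Fin p → ℝ) →ₗ[ℝ] Matrix (Fin m) (Fin n) ℝ)
    (hadj : ∀ (X : Matrix (Fin m) (Fin n) ℝ) (v : Fin p → ℝ),
      vInner (𝒜 X) v = mInner X (𝒜adj v))
    (Δ : ℝ) (hΔ : Δ ∈ Set.Ico (0:ℝ) 1)
    (𝒮 : Submodule ℝ (Matrix (Fin m) (Fin n) ℝ))
    (hRIP : ∀ Z ∈ 𝒮, (1 - Δ) * frobSq Z ≤ vNormSq (𝒜 Z) ∧ vNormSq (𝒜 Z) ≤ (1 + Δ) * frobSq Z)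
    (P : Matrix (Fin m) (Fin n) ℝ →ₗ[ℝ] Matrix (Fin m) (Fin n) ℝ)
    (hPmem : ∀ X : Matrix (Fin m) (Fin n) ℝ, P X ∈ 𝒮)
    (hPorth : ∀ X : Matrix (Fin m) (Fin n) ℝ, ∀ Z ∈ 𝒮, mInner (X - P X) Z = 0)
    (α : ℝ) (hα : 0 ≤ α) :
    (∀ Z ∈ 𝒮,
      (1 - α * (1 + Δ)) * frobSq Z ≤ mInner Z (Z - α • P (𝒜adj (𝒜 Z))) ∧
      mInner Z (Z - α • P (𝒜adj (𝒜 Z))) ≤ (1 - α * (1 - Δ)) * frobSq Z) ∧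
    (∀ Z₁ ∈ 𝒮, ∀ Z₂ ∈ 𝒮,
      mInner Z₁ Z₂ - α * vInner (𝒜 Z₁) (𝒜 Z₂) ≤
        max |1 - α * (1 - Δ)| |1 - α * (1 + Δ)| * frobNorm Z₁ * frobNorm Z₂) :=
  projected_gradient_bounds_general m n p 𝒜 𝒜adj hadj Δ 𝒮 hRIP P hPorth α hα
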